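/- arXiv:1305.0860 — 2 statements merged into one kernel-verified Lean document; each statement's English description precedes it below -/
import Mathlib

section
/- Let f : F_2^n → F_2 have ANF coefficients (a_u), so f(x) = ⊕_{u ⪯ x} a_u. Viewing each a_u as an element of {0,1} ⊆ ℤ, the weight of f satisfies wt(f) = Σ_{∅ ≠ I ⊆ F_2^n} (−2)^{|I|−1} · 2^{n − wt(∨_{u∈I} u)} · ∏_{u ∈ I} a_u, where the sum is over nonempty finite subsets I of F_2^n and ∨ denotes componentwise OR. -/
open Finset

abbrev supp {n : ℕ} (x : Fin n → ZMod 2) : Finset (Fin n) := univ.filter (fun i => x i ≠ 0)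
abbrev wt {n : ℕ} (x : Fin n → ZMod 2) : ℕ := (supp x).card

/-!
Write `χ(z) = 1 - 2 z` for the integer lift of `z ∈ F₂`; it turns addition in `F₂` into
multiplication in `ℤ`. Hence `1 - 2 f(x) = ∏_{u ⪯ x} (1 - 2 a_u)`, and expanding the product gives
`f(x) = ∑_{∅ ≠ I, I ⪯ x} (-2)^{|I|-1} ∏_{u ∈ I} a_u` over the integers, where `I ⪯ x` means every
`u ∈ I` lies below `x`, i.e. `∨_{u ∈ I} u ⪯ x`. Summing over `x` and exchanging the sums, each `I`
is counted once for each of the `2^{n - wt(∨ I)}` vectors `x` above `∨_{u ∈ I} u`.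
-/

namespace ZMod

lemma one_sub_two_mul_val_add (x y : ZMod 2) :
    1 - 2 * ((x + y).val : ℤ) = (1 - 2 * (x.val : ℤ)) * (1 - 2 * (y.val : ℤ)) := by
  fin_cases x <;> fin_cases y <;> rfl

lemma one_sub_two_mul_val_sum {α : Type*} (s : Finset α) (g : α → ZMod 2) :
    1 - 2 * ((∑ i ∈ s, g i).val : ℤ) = ∏ i ∈ s, (1 - 2 * ((g i).val : ℤ)) := by
  classical
  induction s using Finset.induction_on with
  | empty => simp
  | insert i s hi ih => rw [sum_insert hi, prod_insert hi, one_sub_two_mul_val_add, ih]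

lemma val_sum_eq_sum_powerset {α : Type*} [DecidableEq α] (s : Finset α) (g : α → ZMod 2) :
    ((∑ i ∈ s, g i).val : ℤ)
      = ∑ I ∈ s.powerset.filter (· ≠ ∅), (-2) ^ (I.card - 1) * ∏ i ∈ I, ((g i).val : ℤ) := by
  have hexpand : 1 - 2 * ((∑ i ∈ s, g i).val : ℤ)
      = ∑ I ∈ s.powerset, (-2) ^ I.card * ∏ i ∈ I, ((g i).val : ℤ) := by
    rw [one_sub_two_mul_val_sum]
    simp only [sub_eq_add_neg, ← neg_mul, prod_one_add, prod_mul_distrib, prod_const]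
  have hnonempty : ∀ I ∈ s.powerset.erase ∅, (-2 : ℤ) ^ I.card * ∏ i ∈ I, ((g i).val : ℤ)
      = -2 * ((-2) ^ (I.card - 1) * ∏ i ∈ I, ((g i).val : ℤ)) := fun I hI => by
    have hcard : 0 < I.card := card_pos.2 (nonempty_of_ne_empty (ne_of_mem_erase hI))
    rw [← mul_assoc, ← pow_succ', Nat.sub_add_cancel hcard]
  rw [← add_sum_erase _ _ (empty_mem_powerset s), sum_congr rfl hnonempty, ← mul_sum] at hexpand
  simp only [card_empty, pow_zero, prod_empty, mul_one] at hexpand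
  rw [filter_ne']
  linarith

lemma natCast_card_filter_eq_one {α : Type*} (s : Finset α) (g : α → ZMod 2) :
    ((s.filter (g · = 1)).card : ℤ) = ∑ x ∈ s, ((g x).val : ℤ) := by
  rw [card_filter]
  push_cast
  refine sum_congr rfl fun x _ => ?_
  generalize g x = z
  fin_cases z <;> rfl

end ZMod

lemma card_filter_subset_supp {n : ℕ} (B : Finset (Fin n)) :
    (univ.filter (fun x : Fin n → ZMod 2 => B ⊆ supp x)).card = 2 ^ (n - B.card) := by
  have hpi : univ.filter (fun x : Fin n → ZMod 2 => B ⊆ supp x)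
      = Fintype.piFinset (fun i => if i ∈ B then {1} else univ) := by
    ext x
    simp only [mem_filter, mem_univ, true_and, Fintype.mem_piFinset, subset_iff]
    refine forall_congr' fun i => ?_
    by_cases hi : i ∈ B
    · simp only [hi, true_imp_iff, if_true, mem_singleton]
      generalize x i = z
      revert z; decide
    · simp [hi]
  rw [hpi, Fintype.card_piFinset]
  simp [apply_ite, prod_ite, filter_not, card_univ_sdiff]

lemma sum_sum_nonempty_families_below {R : Type*} [Semiring R] {n : ℕ}
    (T : Finset (Fin n → ZMod 2) → R) :
    ∑ x : Fin n → ZMod 2,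
        ∑ I ∈ (univ.filter (fun u => supp u ⊆ supp x)).powerset.filter (· ≠ ∅), T I
      = ∑ I ∈ (univ : Finset (Fin n → ZMod 2)).powerset.filter (· ≠ ∅),
          2 ^ (n - (I.biUnion supp).card) * T I := by
  rw [sum_comm' (t' := univ.powerset.filter (· ≠ ∅))
    (s' := fun I => univ.filter (fun x => I.biUnion supp ⊆ supp x))]
  · simp only [sum_const, card_filter_subset_supp, nsmul_eq_mul, Nat.cast_pow, Nat.cast_ofNat]
  · intro x I
    have hlower : I ⊆ univ.filter (fun u => supp u ⊆ supp x) ↔ ∀ u ∈ I, supp u ⊆ supp x := by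
      simp only [subset_iff, mem_filter, mem_univ, true_and]
    simp only [mem_filter, mem_powerset, hlower, mem_univ, subset_univ, true_and, biUnion_subset]

theorem stmt11 {n : ℕ} (f a : (Fin n → ZMod 2) → ZMod 2)
    (hf : ∀ x, f x = ∑ u ∈ univ.filter (fun u : Fin n → ZMod 2 => supp u ⊆ supp x), a u) :
    ((univ.filter (fun x : Fin n → ZMod 2 => f x = 1)).card : ℤ)
      = ∑ I ∈ (univ : Finset (Fin n → ZMod 2)).powerset.filter (fun I => I ≠ ∅),
          (-2 : ℤ) ^ (I.card - 1) * 2 ^ (n - (I.biUnion supp).card) *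
            ∏ u ∈ I, ((a u).val : ℤ) := by
  rw [ZMod.natCast_card_filter_eq_one]
  simp_rw [hf, ZMod.val_sum_eq_sum_powerset]
  rw [sum_sum_nonempty_families_below]
  exact sum_congr rfl fun I _ => by ring
end

section
/- Let f : F_2^n → F_2 with ANF f(x) = ⊕_{u ⪯ x} a_u, let w ∈ F_2^n be nonzero, and define the integer-valued distance expansion d(f, l_w) = 2^{n−1} + Σ_{∅ ≠ I} λ_I^w ∏_{u∈I} a_u where λ_I^w equals λ_I = (−2)^{|I|−1} 2^{n − wt(v_I)} if w ⪯ v_I and wt(w) is even, equals −λ_I if w ⪯ v_I and wt(w) is odd, and 0 if w ⋠ v_I, with v_I = ∨_{u∈I} u. Then this expansion equals the Hamming distance d(f, l_w) for every f. -/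
/-
With `χ b = (-1)^b`, the distance is `2 d(f, l_w) = 2^n - ∑ₓ χ(f x) χ(l_w x)`. Expanding
`χ(f x) = ∏_{u ⪯ x} (1 - 2 a_u)` as a sum over sets `I` of monomials `u ⪯ x`, i.e. over
`I` with `v_I ⪯ x`, and exchanging the sums, the coefficient of `∏_{u ∈ I} a_u` is
`(-2)^|I|` times the character sum of `l_w` over the subcube `{x | v_I ⪯ x}`. That sum
factors over the coordinates and equals `(-1)^{wt w} 2^{n - wt v_I}` if `w ⪯ v_I` and `0`
otherwise.
-/

open Finset

def chi (b : ZMod 2) : ℤ := (-1) ^ b.val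

@[simp] lemma chi_zero : chi 0 = 1 := rfl

lemma chi_add (x y : ZMod 2) : chi (x + y) = chi x * chi y := by decide +revert

lemma chi_eq_one_add_neg_two_mul_val (b : ZMod 2) : chi b = 1 + -2 * b.val := by decide +revert

lemma chi_sum {α : Type*} (s : Finset α) (g : α → ZMod 2) :
    chi (∑ i ∈ s, g i) = ∏ i ∈ s, chi (g i) := by
  induction s using Finset.cons_induction with
  | empty => rfl
  | cons a s ha ih => rw [sum_cons, prod_cons, chi_add, ih]

lemma zmod2_ne_zero_iff_eq_one (b : ZMod 2) : b ≠ 0 ↔ b = 1 := by decide +revert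

lemma sum_chi_mul (b : ZMod 2) : ∑ j, chi (b * j) = if b = 0 then 2 else 0 := by decide +revert

lemma chi_sum_eq_sum_powerset {α : Type*} (s : Finset α) (a : α → ZMod 2) :
    chi (∑ u ∈ s, a u) = ∑ I ∈ s.powerset, (-2) ^ #I * ∏ u ∈ I, ((a u).val : ℤ) := by
  rw [chi_sum]
  simp only [chi_eq_one_add_neg_two_mul_val, prod_one_add, prod_mul_distrib, prod_const]

lemma supp_nonempty {n : ℕ} {w : Fin n → ZMod 2} (hw : w ≠ 0) : (supp w).Nonempty := by
  contrapose! hw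
  ext i
  simpa using filter_eq_empty_iff.mp hw (mem_univ i)

lemma nonempty_of_supp_subset_biUnion_supp {n : ℕ} {w : Fin n → ZMod 2} (hw : w ≠ 0)
    {I : Finset (Fin n → ZMod 2)} (h : supp w ⊆ I.biUnion supp) : I.Nonempty := by
  rw [nonempty_iff_ne_empty]
  rintro rfl
  exact (supp_nonempty hw).ne_empty (subset_empty.mp h)

lemma filter_subset_supp_eq_piFinset {n : ℕ} (T : Finset (Fin n)) :
    univ.filter (fun x : Fin n → ZMod 2 => T ⊆ supp x)
      = Fintype.piFinset (fun i => if i ∈ T then {1} else univ) := by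
  ext x
  simp only [mem_filter, mem_univ, true_and, Fintype.mem_piFinset, subset_iff]
  refine forall_congr' fun i => ?_
  by_cases hi : i ∈ T <;> simp [hi, zmod2_ne_zero_iff_eq_one]

lemma sum_chi_dot_filter_subset_supp {n : ℕ} (w : Fin n → ZMod 2) (T : Finset (Fin n)) :
    ∑ x ∈ univ.filter (fun x : Fin n → ZMod 2 => T ⊆ supp x), chi (∑ i, w i * x i)
      = if supp w ⊆ T then (-1) ^ wt w * 2 ^ (n - #T) else 0 := by
  have hfactor : ∀ i, ∑ j ∈ (if i ∈ T then {1} else univ), chi (w i * j)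
      = if i ∈ T then chi (w i) else if w i = 0 then 2 else 0 := fun i => by
    split_ifs <;> simp_all [sum_chi_mul]
  rw [filter_subset_supp_eq_piFinset, ← sum_congr rfl fun x _ => (chi_sum univ _).symm,
    ← prod_univ_sum _ fun i j => chi (w i * j), prod_congr rfl fun i _ => hfactor i]
  split_ifs with hwT
  · rw [← prod_mul_prod_compl T]
    have hT :
        ∏ i ∈ T, (if i ∈ T then chi (w i) else if w i = 0 then 2 else 0) = (-1) ^ wt w :=
      calc ∏ i ∈ T, (if i ∈ T then chi (w i) else if w i = 0 then 2 else 0)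
          = ∏ i ∈ T, chi (w i) := prod_congr rfl fun i hi => if_pos hi
        _ = ∏ i ∈ supp w, chi (w i) := (prod_subset hwT fun i _ hi => by simp_all).symm
        _ = ∏ _i ∈ supp w, (-1) := prod_congr rfl fun i hi => by
          rw [(zmod2_ne_zero_iff_eq_one _).mp (mem_filter.mp hi).2]; rfl
        _ = (-1) ^ wt w := prod_const _
    have hTc : ∏ i ∈ Tᶜ, (if i ∈ T then chi (w i) else if w i = 0 then 2 else 0)
        = 2 ^ (n - #T) := by
      rw [prod_congr rfl fun i hi => ?_, prod_const, card_compl, Fintype.card_fin]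
      have hiT : i ∉ T := mem_compl.mp hi
      have hwi : w i = 0 := by_contra fun h => hiT (hwT (by simpa using h))
      simp [hiT, hwi]
    rw [hT, hTc]
  · obtain ⟨i, hiw, hiT⟩ := not_subset.mp hwT
    exact prod_eq_zero (mem_univ i) (by simp_all)

lemma two_mul_card_filter_ne {α : Type*} [Fintype α] (g h : α → ZMod 2) :
    2 * (#{x | g x ≠ h x} : ℤ) = Fintype.card α - ∑ x, chi (g x + h x) := by
  have hchi : ∀ x, chi (g x + h x) = 1 - 2 * if g x ≠ h x then 1 else 0 := fun x => by
    generalize g x = b; generalize h x = c; decide +revert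
  simp only [hchi, sum_sub_distrib, ← mul_sum, sum_boole, sum_const, card_univ, nsmul_one]
  ring

lemma sum_chi_add_dot_eq_sum_powerset {n : ℕ} (f a : (Fin n → ZMod 2) → ZMod 2)
    (hf : ∀ x, f x = ∑ u ∈ univ.filter (fun u : Fin n → ZMod 2 => supp u ⊆ supp x), a u)
    (w : Fin n → ZMod 2) :
    ∑ x, chi (f x + ∑ i, w i * x i)
      = ∑ I ∈ (univ : Finset (Fin n → ZMod 2)).powerset,
          (-2) ^ #I * (∏ u ∈ I, ((a u).val : ℤ)) *
            if supp w ⊆ I.biUnion supp then (-1) ^ wt w * 2 ^ (n - #(I.biUnion supp)) else 0 := by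
  calc ∑ x, chi (f x + ∑ i, w i * x i)
      = ∑ x, ∑ I ∈ (univ.filter fun u => supp u ⊆ supp x).powerset,
          (-2) ^ #I * (∏ u ∈ I, ((a u).val : ℤ)) * chi (∑ i, w i * x i) := by
        refine sum_congr rfl fun x _ => ?_
        rw [chi_add, hf, chi_sum_eq_sum_powerset, sum_mul]
    _ = ∑ I ∈ (univ : Finset (Fin n → ZMod 2)).powerset,
          ∑ x ∈ univ.filter (I.biUnion supp ⊆ supp ·),
          (-2) ^ #I * (∏ u ∈ I, ((a u).val : ℤ)) * chi (∑ i, w i * x i) := by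
        refine sum_comm' fun x I => ?_
        simp only [mem_univ, true_and, and_true, mem_powerset, subset_univ, mem_filter,
          biUnion_subset]
        exact ⟨fun h u hu => (mem_filter.mp (h hu)).2,
          fun h u hu => mem_filter.mpr ⟨mem_univ u, h u hu⟩⟩
    _ = _ := sum_congr rfl fun I _ => by rw [← mul_sum, sum_chi_dot_filter_subset_supp]

theorem stmt16 {n : ℕ} (f a : (Fin n → ZMod 2) → ZMod 2)
    (hf : ∀ x, f x = ∑ u ∈ univ.filter (fun u : Fin n → ZMod 2 => supp u ⊆ supp x), a u)
    (w : Fin n → ZMod 2) (hw : w ≠ 0) :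
    ((univ.filter (fun x : Fin n → ZMod 2 => f x ≠ ∑ i, w i * x i)).card : ℤ)
      = 2 ^ (n - 1) + ∑ I ∈ (univ : Finset (Fin n → ZMod 2)).powerset.filter (fun I => I ≠ ∅),
          (if supp w ⊆ I.biUnion supp then
              (if Even (wt w) then (-2 : ℤ) ^ (I.card - 1) * 2 ^ (n - (I.biUnion supp).card)
               else -((-2 : ℤ) ^ (I.card - 1) * 2 ^ (n - (I.biUnion supp).card)))
            else 0) * ∏ u ∈ I, ((a u).val : ℤ) := by
  obtain ⟨i, -⟩ := supp_nonempty hw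
  -- the term of `I = ∅` vanishes because `w ≠ 0`, so the filter `I ≠ ∅` can be dropped
  rw [sum_filter_of_ne fun I _ hI =>
    (nonempty_of_supp_subset_biUnion_supp hw (by by_contra h; simp [h] at hI)).ne_empty]
  apply mul_left_cancel₀ (two_ne_zero' ℤ)
  rw [two_mul_card_filter_ne, sum_chi_add_dot_eq_sum_powerset f a hf, mul_add, ← pow_succ',
    Nat.sub_add_cancel i.pos, sub_eq_add_neg, ← sum_neg_distrib, mul_sum]
  simp only [Fintype.card_fun, ZMod.card, Fintype.card_fin, Nat.cast_pow, Nat.cast_ofNat]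
  congr 1
  refine sum_congr rfl fun I _ => ?_
  by_cases hcover : supp w ⊆ I.biUnion supp
  · have hI : #I ≠ 0 := (nonempty_of_supp_subset_biUnion_supp hw hcover).card_ne_zero
    rw [if_pos hcover, if_pos hcover, ← pow_sub_one_mul hI]
    rcases Nat.even_or_odd (wt w) with hwt | hwt
    · rw [if_pos hwt, hwt.neg_one_pow]; ring
    · rw [if_neg (Nat.not_even_iff_odd.mpr hwt), hwt.neg_one_pow]; ring
  · simp [hcover]
end
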